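/- arXiv:1404.0717 — 4 statements merged into one kernel-verified Lean document; each statement's English description precedes it below -/
import Mathlib

section
/- Let p be a prime, X a finite set, and S a finite set of pairwise commuting elements of Equiv.Perm X, each of order a power of p. Then the centralizer of S in Equiv.Perm X is isomorphic as a group to a finite product ∏_{i=1}^{r} A_i ≀ Σ_{n_i}, where each A_i is a finite abelian p-group and each n_i is a positive integer. -/
/-- The action of `Equiv.Perm (Fin n)` on `Fin n → A` by `(σ • f) i = f (σ⁻¹ i)`. -/
def permMulAut (A : Type*) [Group A] (n : ℕ) : Equiv.Perm (Fin n) →* MulAut (Fin n → A) where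
  toFun σ := MulEquiv.arrowCongr σ (MulEquiv.refl A)
  map_one' := by ext f i; rfl
  map_mul' σ τ := by ext f i; rfl

/-- The wreath product `A ≀ Σ_n = (Fin n → A) ⋊ Equiv.Perm (Fin n)`. -/
abbrev WreathProduct (A : Type*) [Group A] (n : ℕ) : Type _ :=
  SemidirectProduct (Fin n → A) (Equiv.Perm (Fin n)) (permMulAut A n)

/-- A factor `A ≀ Σ_n` where `A` is a finite abelian `p`-group and `n` is a positive
integer. -/
structure PWreathFactor (p : ℕ) where
  /-- the abelian group `A` -/
  A : Type
  [instA : CommGroup A]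
  [finA : Finite A]
  /-- `A` is a `p`-group -/
  card_pow : ∃ k : ℕ, Nat.card A = p ^ k
  /-- the degree of the symmetric group -/
  n : ℕ
  n_pos : 0 < n

attribute [instance] PWreathFactor.instA PWreathFactor.finA

/-!
Let `P` be the subgroup generated by `S`: it is an abelian `p`-group with the same centralizer as
`S`. Each `P`-orbit in `X` is `P ⧸ H` for its stabilizer `H`, so collecting the orbits with equal
stabilizers gives a `P`-equivariant bijection `X ≃ Σ i, Fin (n i) × P ⧸ H i` with distinct `H i`,
on which `P` acts by right multiplication on the second factor. A permutation commuting with `P`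
preserves stabilizers, hence each block `Fin n × A`; there, commuting with every right
multiplication by `A` forces the form `(ω, a) ↦ (σ ω, f (σ ω) * a)`, which is the action of
`(f, σ) ∈ A ≀ Σ_n`.
-/

open Equiv Subgroup

namespace Equiv.Perm

variable {α : Type*} {β : α → Type*}

theorem mem_range_sigmaCongrRightHom_iff {c : Perm (Σ a, β a)} :
    c ∈ (sigmaCongrRightHom β).range ↔ ∀ x, (c x).1 = x.1 := by
  refine ⟨by rintro ⟨F, rfl⟩ x; rfl, fun h => ?_⟩
  have sigma_mk_sigmaSubtype (a : α) (y : {s : Σ a, β a // s.1 = a}) :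
      (⟨a, sigmaSubtype a y⟩ : Σ a, β a) = y := by
    obtain ⟨⟨_, _⟩, rfl⟩ := y
    rfl
  refine ⟨fun a => (sigmaSubtype a).permCongr (c.subtypePerm fun x => by rw [h]), ?_⟩
  ext ⟨a, b⟩ : 1
  exact sigma_mk_sigmaSubtype a ⟨c ⟨a, b⟩, h _⟩

theorem commute_sigmaCongrRight_iff {F F' : ∀ a, Perm (β a)} :
    Commute (sigmaCongrRight F) (sigmaCongrRight F') ↔ ∀ a, Commute (F a) (F' a) :=
  (commute_map_iff (f := sigmaCongrRightHom β) sigmaCongrRightHom_injective).trans Pi.commute_iff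

end Equiv.Perm

theorem Subgroup.map_centralizer_mulEquiv {G G' : Type*} [Group G] [Group G'] (e : G ≃* G')
    (s : Set G) : (centralizer s).map (e : G →* G') = centralizer (e '' s) := by
  refine le_antisymm (map_centralizer_le_centralizer_image s _) fun y hy =>
    ⟨e.symm y, fun g hg => e.injective ?_, e.apply_symm_apply y⟩
  simpa using hy (e g) ⟨g, hg, rfl⟩

def MulEquiv.centralizerCongr {G G' : Type*} [Group G] [Group G'] (e : G ≃* G') {s : Set G}
    {t : Set G'} (h : e '' s = t) : centralizer s ≃* centralizer t :=
  (e.subgroupMap (centralizer s)).trans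
    (MulEquiv.subgroupCongr (h ▸ Subgroup.map_centralizer_mulEquiv e s))

theorem Subgroup.isPGroup_closure {G : Type*} [Group G] {p : ℕ} {s : Set G}
    (hcomm : ∀ x ∈ s, ∀ y ∈ s, x * y = y * x) (hs : ∀ g ∈ s, ∃ k, g ^ p ^ k = 1) :
    IsPGroup p (closure s) := by
  have := isMulCommutative_closure hcomm
  rintro ⟨g, hg⟩
  simp only [← Subtype.coe_inj, SubmonoidClass.coe_pow, OneMemClass.coe_one]
  induction hg using closure_induction with
  | mem g hg => exact hs g hg
  | one => exact ⟨0, one_pow _⟩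
  | mul x y hx hy ihx ihy =>
    obtain ⟨k, hk⟩ := ihx
    obtain ⟨m, hm⟩ := ihy
    have hxy : Commute x y := congr_arg Subtype.val (mul_comm' (⟨x, hx⟩ : closure s) ⟨y, hy⟩)
    refine ⟨k + m, ?_⟩
    rw [hxy.mul_pow, pow_add, pow_mul, hk, one_pow, mul_comm (p ^ k), pow_mul, hm, one_pow, one_mul]
  | inv x hx ih =>
    obtain ⟨k, hk⟩ := ih
    exact ⟨k, by rw [inv_pow, hk, inv_one]⟩

theorem Finite.exists_sigma_fin_equiv {Ω β : Type*} [Finite Ω] (f : Ω → β) :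
    ∃ (r : ℕ) (b : Fin r → β) (n : Fin r → ℕ), Function.Injective b ∧ (∀ i, 0 < n i) ∧
      ∃ e : (Σ i, Fin (n i)) ≃ Ω, ∀ x, f (e x) = b x.1 := by
  let eI := (Finite.equivFin (Set.range f)).symm
  let fiber i := {ω // Set.rangeFactorization f ω = eI i}
  let eF i : Fin (Nat.card (fiber i)) ≃ fiber i := (Finite.equivFin _).symm
  refine ⟨_, fun i => eI i, fun i => Nat.card (fiber i), Subtype.val_injective.comp eI.injective,
    fun i => ?_, (sigmaCongrRight eF).trans ((sigmaCongrLeft eI).trans (sigmaFiberEquiv _)),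
    fun ⟨i, k⟩ => congr_arg Subtype.val (eF i k).2⟩
  obtain ⟨ω, hω⟩ := (eI i).2
  have : Nonempty (fiber i) := ⟨⟨ω, Subtype.ext hω⟩⟩
  exact Nat.card_pos

namespace WreathProduct

variable (A : Type*) [Group A] (n : ℕ)

def toPerm : WreathProduct A n →* Perm (Fin n × A) where
  toFun w := Equiv.prodShear w.right fun ω => Equiv.mulLeft (w.left (w.right ω))
  map_one' := by ext ⟨ω, a⟩ <;> simp [Equiv.prodShear]
  map_mul' w v := by
    ext ⟨ω, a⟩
    · rfl
    · simp [Equiv.prodShear, permMulAut]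

variable {A n}

@[simp]
theorem toPerm_apply (w : WreathProduct A n) (ω : Fin n) (a : A) :
    toPerm A n w (ω, a) = (w.right ω, w.left (w.right ω) * a) := rfl

theorem toPerm_injective : Function.Injective (toPerm A n) := by
  refine (injective_iff_map_eq_one _).2 fun w hw => ?_
  have h ω : (w.right ω, w.left (w.right ω)) = (ω, 1) := by
    simpa using congr($hw (ω, 1))
  have hright : w.right = 1 := Equiv.ext fun ω => congr_arg Prod.fst (h ω)
  refine SemidirectProduct.ext (funext fun ω => ?_) hright
  simpa [hright] using congr_arg Prod.snd (h ω)

def rightMulPerm (n : ℕ) (a : A) : Perm (Fin n × A) := (Equiv.refl _).prodCongr (Equiv.mulRight a)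

@[simp]
theorem rightMulPerm_apply (a : A) (y : Fin n × A) : rightMulPerm n a y = (y.1, y.2 * a) := rfl

theorem range_toPerm : (toPerm A n).range = centralizer (Set.range (rightMulPerm n)) := by
  ext c
  refine ⟨?_, fun hc => ?_⟩
  · rintro ⟨w, rfl⟩ _ ⟨a, rfl⟩
    ext ⟨ω, b⟩ <;> simp [mul_assoc]
  · have hc_apply (ω : Fin n) (a : A) : c (ω, a) = ((c (ω, 1)).1, (c (ω, 1)).2 * a) := by
      simpa using congr($(hc _ ⟨a, rfl⟩) (ω, 1)).symm
    have hsurj : Function.Surjective fun ω => (c (ω, 1)).1 := fun ω' => by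
      have h := hc_apply (c.symm (ω', 1)).1 (c.symm (ω', 1)).2
      rw [Prod.mk.eta, Equiv.apply_symm_apply] at h
      exact ⟨_, congr_arg Prod.fst h.symm⟩
    set σ := Equiv.ofBijective _ (Finite.surjective_iff_bijective.mp hsurj)
    refine ⟨⟨fun ω => (c (σ.symm ω, 1)).2, σ⟩, Equiv.ext fun ⟨ω, a⟩ => ?_⟩
    simp [hc_apply ω a, σ]

def congrLeft {B : Type*} [Group B] (e : A ≃* B) (n : ℕ) : WreathProduct A n ≃* WreathProduct B n :=
  SemidirectProduct.congr (MulEquiv.piCongrRight fun _ => e) (MulEquiv.refl _) fun _ => rfl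

end WreathProduct

section SigmaModel

variable {ι G : Type*} {A : ι → Type*} [∀ i, Group (A i)] [Group G] (n : ι → ℕ)

def sigmaRightMulPerm (π : ∀ i, G →* A i) (g : G) : Perm (Σ i, Fin (n i) × A i) :=
  Perm.sigmaCongrRight fun i => WreathProduct.rightMulPerm (n i) (π i g)

def sigmaToPerm : (∀ i, WreathProduct (A i) (n i)) →* Perm (Σ i, Fin (n i) × A i) :=
  (Perm.sigmaCongrRightHom _).comp (MonoidHom.piMap fun i => WreathProduct.toPerm (A i) (n i))

variable {n} {π : ∀ i, G →* A i}

theorem sigmaRightMulPerm_apply_eq_self_iff {g : G} {y : Σ i, Fin (n i) × A i} :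
    sigmaRightMulPerm n π g y = y ↔ g ∈ (π y.1).ker := by
  obtain ⟨i, ω, a⟩ := y
  simp [sigmaRightMulPerm, Perm.sigmaCongrRight]

theorem sigma_fst_apply_of_mem_centralizer (hker : Function.Injective fun i => (π i).ker)
    {c : Perm (Σ i, Fin (n i) × A i)} (hc : c ∈ centralizer (Set.range (sigmaRightMulPerm n π)))
    (y : Σ i, Fin (n i) × A i) : (c y).1 = y.1 := by
  refine hker (SetLike.ext fun g => ?_)
  have hcomm : sigmaRightMulPerm n π g (c y) = c (sigmaRightMulPerm n π g y) :=
    congr($(hc _ ⟨g, rfl⟩) y)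
  simp only [← sigmaRightMulPerm_apply_eq_self_iff, hcomm, c.injective.eq_iff]

theorem sigmaToPerm_injective : Function.Injective (sigmaToPerm (A := A) n) :=
  Perm.sigmaCongrRightHom_injective.comp
    (Function.Injective.piMap fun _ => WreathProduct.toPerm_injective)

theorem range_sigmaToPerm (hsurj : ∀ i, Function.Surjective (π i))
    (hker : Function.Injective fun i => (π i).ker) :
    (sigmaToPerm n).range = centralizer (Set.range (sigmaRightMulPerm n π)) := by
  ext c
  refine ⟨?_, fun hc => ?_⟩
  · rintro ⟨w, rfl⟩ _ ⟨g, rfl⟩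
    refine Perm.commute_sigmaCongrRight_iff.2 fun i => ?_
    exact (WreathProduct.range_toPerm.le ⟨w i, rfl⟩) _ ⟨π i g, rfl⟩
  · obtain ⟨F, rfl⟩ :=
      Perm.mem_range_sigmaCongrRightHom_iff.2 (sigma_fst_apply_of_mem_centralizer hker hc)
    have hF i : F i ∈ (WreathProduct.toPerm (A i) (n i)).range := by
      rw [WreathProduct.range_toPerm]
      rintro _ ⟨a, rfl⟩
      obtain ⟨g, rfl⟩ := hsurj i a
      exact Perm.commute_sigmaCongrRight_iff.1 (hc (sigmaRightMulPerm n π g) ⟨g, rfl⟩) i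
    choose w hw using hF
    exact ⟨w, congr_arg (Perm.sigmaCongrRightHom _) (funext hw)⟩

noncomputable def centralizerSigmaRightMulPermEquiv (hsurj : ∀ i, Function.Surjective (π i))
    (hker : Function.Injective fun i => (π i).ker) :
    centralizer (Set.range (sigmaRightMulPerm n π)) ≃* ∀ i, WreathProduct (A i) (n i) :=
  ((MonoidHom.ofInjective sigmaToPerm_injective).trans
    (MulEquiv.subgroupCongr (range_sigmaToPerm hsurj hker))).symm

end SigmaModel

namespace MulAction

theorem exists_sigma_quotient_equiv (G X : Type*) [CommGroup G] [MulAction G X] [Finite X] :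
    ∃ (r : ℕ) (H : Fin r → Subgroup G) (n : Fin r → ℕ), Function.Injective H ∧ (∀ i, 0 < n i) ∧
      ∃ e : (Σ i, Fin (n i) × G ⧸ H i) ≃ X,
        ∀ g y, e (sigmaRightMulPerm n (fun i => QuotientGroup.mk' (H i)) g y) = g • e y := by
  obtain ⟨r, H, n, hH, hn, eΩ, hstab⟩ :=
    Finite.exists_sigma_fin_equiv fun ω : orbitRel.Quotient G X => stabilizer G ω.out
  let e : (Σ i, Fin (n i) × G ⧸ H i) ≃ X :=
    (sigmaCongrRight fun i => (sigmaEquivProd _ _).symm).trans <|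
    (sigmaAssoc fun i _ => G ⧸ H i).symm.trans <|
    (sigmaCongrRight fun x => quotientEquivOfEq (hstab x).symm).trans <|
    (sigmaCongrLeft eΩ).trans (selfEquivSigmaOrbitsQuotientStabilizer G X).symm
  have he i k (u : G) : e ⟨i, k, u⟩ = u • (eΩ ⟨i, k⟩).out := rfl
  refine ⟨r, H, n, hH, hn, e, fun g => ?_⟩
  rintro ⟨i, k, a⟩
  induction a using QuotientGroup.induction_on with | H u => ?_
  change e ⟨i, k, ((u * g : G) : G ⧸ H i)⟩ = _
  rw [he, he, mul_comm, mul_smul]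

theorem exists_centralizer_equiv_pi_wreath (G X : Type*) [CommGroup G] [MulAction G X]
    [Finite X] :
    ∃ (r : ℕ) (H : Fin r → Subgroup G) (n : Fin r → ℕ), (∀ i, 0 < n i) ∧
      Nonempty (centralizer (Set.range (toPerm : G → Perm X)) ≃*
        ∀ i, WreathProduct (G ⧸ H i) (n i)) := by
  obtain ⟨r, H, n, hH, hn, e, he⟩ := exists_sigma_quotient_equiv G X
  have himage : e.symm.permCongrHom '' Set.range (toPerm : G → Perm X) =
      Set.range (sigmaRightMulPerm n fun i => QuotientGroup.mk' (H i)) := by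
    rw [← Set.range_comp]
    congr 1
    ext g y : 2
    simp [Equiv.permCongr_apply, ← he]
  refine ⟨r, H, n, hn, ⟨(MulEquiv.centralizerCongr _ himage).trans
    (centralizerSigmaRightMulPermEquiv (fun i => QuotientGroup.mk'_surjective _) ?_)⟩⟩
  simpa only [QuotientGroup.ker_mk'] using hH

end MulAction

namespace PWreathFactor

variable {p : ℕ} [Fact p.Prime] {A : Type*} [CommGroup A] [Finite A]

noncomputable def ofIsPGroup (hA : IsPGroup p A) (n : ℕ) (hn : 0 < n) : PWreathFactor p where
  A := Shrink.{0} A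
  card_pow := by
    rw [Nat.card_congr (equivShrink.{0} A).symm]
    exact IsPGroup.iff_card.1 hA
  n := n
  n_pos := hn

noncomputable def ofIsPGroupWreathEquiv (hA : IsPGroup p A) (n : ℕ) (hn : 0 < n) :
    WreathProduct (ofIsPGroup hA n hn).A (ofIsPGroup hA n hn).n ≃* WreathProduct A n :=
  WreathProduct.congrLeft Shrink.mulEquiv n

end PWreathFactor

/-- Let `p` be a prime, `X` a finite set, and `S` a finite set of
pairwise commuting elements of `Equiv.Perm X`, each of order a power of `p`.  Then the
centralizer of `S` in `Equiv.Perm X` is isomorphic as a group to a finite product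
`∏_{i=1}^{r} A_i ≀ Σ_{n_i}` with each `A_i` a finite abelian `p`-group and each `n_i` a
positive integer. -/
theorem centralizer_comm_ppower_iso_prod_wreath
    {X : Type*} [Fintype X] (p : ℕ) (hp : p.Prime) (S : Finset (Equiv.Perm X))
    (hcomm : ∀ σ ∈ S, ∀ τ ∈ S, σ * τ = τ * σ)
    (horder : ∀ σ ∈ S, ∃ k : ℕ, orderOf σ = p ^ k) :
    ∃ (r : ℕ) (F : Fin r → PWreathFactor p),
      Nonempty ((Subgroup.centralizer (↑S : Set (Equiv.Perm X))) ≃*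
        ∀ i : Fin r, WreathProduct (F i).A (F i).n) := by
  have := Fact.mk hp
  let P := closure (S : Set (Perm X))
  have := isMulCommutative_closure hcomm
  let _ : CommGroup P := IsMulCommutative.instCommGroup
  have hP : IsPGroup p P := isPGroup_closure hcomm fun g hg => by
    obtain ⟨k, hk⟩ := horder g hg
    exact ⟨k, hk ▸ pow_orderOf_eq_one g⟩
  obtain ⟨r, H, n, hn, ⟨e⟩⟩ := MulAction.exists_centralizer_equiv_pi_wreath P X
  have hrange : Set.range (MulAction.toPerm : P → Perm X) = P :=
    Set.ext fun σ => ⟨by rintro ⟨g, rfl⟩; exact g.2, fun hσ => ⟨⟨σ, hσ⟩, rfl⟩⟩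
  have hcent : centralizer (S : Set (Perm X)) =
      centralizer (Set.range (MulAction.toPerm : P → Perm X)) := by
    rw [hrange, centralizer_closure]
  refine ⟨r, fun i => .ofIsPGroup (hP.to_quotient (H i)) (n i) (hn i), ⟨?_⟩⟩
  exact (MulEquiv.subgroupCongr hcent).trans <| e.trans <|
    MulEquiv.piCongrRight fun i => (PWreathFactor.ofIsPGroupWreathEquiv _ _ _).symm
end

section
/- Let G be an abelian group acting on a finite nonempty set X through a homomorphism ρ : G →* Equiv.Perm X. Then the centralizer of ρ acts transitively on X if and only if any two points of X have equal stabilizer subgroups in G. -/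
/-- The stabilizer of `x : X` under the action of `G` on `X` through
`ρ : G →* Equiv.Perm X`: the subgroup `{g : G | ρ g x = x}`. -/
def stabOf {G X : Type*} [Group G] (ρ : G →* Equiv.Perm X) (x : X) : Subgroup G :=
  Subgroup.comap ρ (MulAction.stabilizer (Equiv.Perm X) x)

/-!
A permutation commuting with the action preserves stabilizers, which gives one direction.
Conversely, if all stabilizers agree, then `ρ g x = ρ h x ↔ ρ g y = ρ h y`, so
`ρ g x ↦ ρ g y` is a well-defined equivariant bijection from the orbit of `x` onto that of `y`.
If the two orbits coincide, extending it by the identity gives the required permutation; if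
they are disjoint, one extends it by its inverse on the orbit of `y` and by the identity
elsewhere. Both are the extension by the identity of `ρ g (p i) ↦ ρ g (q i)` for suitable
families of points `p q : I → X`.
-/

open Function Set

section OrbitExtension

variable {G X I : Type*} [Group G] {ρ : G →* Equiv.Perm X}

lemma mem_stabOf_iff {x : X} {g : G} : g ∈ stabOf ρ x ↔ ρ g x = x := Iff.rfl

lemma map_apply_eq_map_apply_iff {g h : G} {a b : X} : ρ g a = ρ h b ↔ ρ (h⁻¹ * g) a = b := by
  rw [map_mul, map_inv, Equiv.Perm.mul_apply, Equiv.Perm.inv_eq_iff_eq]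

lemma apply_comm_of_mem_centralizer {σ : Equiv.Perm X} (hσ : σ ∈ Subgroup.centralizer (range ρ))
    (g : G) (x : X) : ρ g (σ x) = σ (ρ g x) :=
  DFunLike.congr_fun (Subgroup.mem_centralizer_iff.mp hσ (ρ g) ⟨g, rfl⟩) x

lemma stabOf_apply_of_mem_centralizer {σ : Equiv.Perm X}
    (hσ : σ ∈ Subgroup.centralizer (range ρ)) (x : X) : stabOf ρ (σ x) = stabOf ρ x := by
  ext g
  rw [mem_stabOf_iff, mem_stabOf_iff, apply_comm_of_mem_centralizer hσ, σ.injective.eq_iff]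

variable (ρ) in
def orbitMap (p : I → X) (a : I × G) : X := ρ a.2 (p a.1)

lemma apply_orbitMap (p : I → X) (g : G) (a : I × G) :
    ρ g (orbitMap ρ p a) = orbitMap ρ p (a.1, g * a.2) := by
  simp only [orbitMap, map_mul, Equiv.Perm.mul_apply]

lemma apply_mem_range_orbitMap_iff {p : I → X} (g : G) {z : X} :
    ρ g z ∈ range (orbitMap ρ p) ↔ z ∈ range (orbitMap ρ p) := by
  constructor
  · rintro ⟨a, ha⟩
    refine ⟨(a.1, g⁻¹ * a.2), ?_⟩
    rw [← apply_orbitMap, ha, ← Equiv.Perm.mul_apply, ← map_mul, inv_mul_cancel, map_one,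
      Equiv.Perm.one_apply]
  · rintro ⟨a, rfl⟩
    exact ⟨_, (apply_orbitMap p g a).symm⟩

lemma factorsThrough_orbitMap {p q : I → X}
    (hpq : ∀ i j g, ρ g (p i) = p j → ρ g (q i) = q j) :
    FactorsThrough (orbitMap ρ q) (orbitMap ρ p) := by
  rintro ⟨i, g⟩ ⟨j, h⟩ hgh
  exact map_apply_eq_map_apply_iff.mpr (hpq i j _ (map_apply_eq_map_apply_iff.mp hgh))

variable (ρ) in
noncomputable def orbitExtend (p q : I → X) : X → X :=
  extend (orbitMap ρ p) (orbitMap ρ q) id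

lemma orbitExtend_orbitMap {p q : I → X} (hpq : FactorsThrough (orbitMap ρ q) (orbitMap ρ p))
    (a : I × G) : orbitExtend ρ p q (orbitMap ρ p a) = orbitMap ρ q a :=
  hpq.extend_apply id a

lemma orbitExtend_of_notMem_range {p q : I → X} {z : X} (hz : z ∉ range (orbitMap ρ p)) :
    orbitExtend ρ p q z = z :=
  extend_apply' _ _ _ hz

lemma orbitExtend_apply {p q : I → X} (hpq : FactorsThrough (orbitMap ρ q) (orbitMap ρ p))
    (g : G) (z : X) : orbitExtend ρ p q (ρ g z) = ρ g (orbitExtend ρ p q z) := by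
  by_cases hz : z ∈ range (orbitMap ρ p)
  · obtain ⟨a, rfl⟩ := hz
    rw [apply_orbitMap, orbitExtend_orbitMap hpq, orbitExtend_orbitMap hpq, apply_orbitMap]
  · rw [orbitExtend_of_notMem_range hz,
      orbitExtend_of_notMem_range (mt (apply_mem_range_orbitMap_iff g).mp hz)]

lemma leftInverse_orbitExtend {p q : I → X}
    (hpq : FactorsThrough (orbitMap ρ q) (orbitMap ρ p))
    (hqp : FactorsThrough (orbitMap ρ p) (orbitMap ρ q))
    (hrange : range (orbitMap ρ q) ⊆ range (orbitMap ρ p)) :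
    LeftInverse (orbitExtend ρ q p) (orbitExtend ρ p q) := by
  intro z
  by_cases hz : z ∈ range (orbitMap ρ p)
  · obtain ⟨a, rfl⟩ := hz
    rw [orbitExtend_orbitMap hpq, orbitExtend_orbitMap hqp]
  · rw [orbitExtend_of_notMem_range hz, orbitExtend_of_notMem_range (mt (@hrange z) hz)]

lemma range_orbitMap_apply (k : I → G) (p : I → X) :
    range (orbitMap ρ fun i => ρ (k i) (p i)) = range (orbitMap ρ p) := by
  have : (orbitMap ρ fun i => ρ (k i) (p i)) = orbitMap ρ p ∘ fun a => (a.1, a.2 * k a.1) := by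
    ext a
    simp only [orbitMap, comp_apply, map_mul, Equiv.Perm.mul_apply]
  rw [this]
  exact Surjective.range_comp (fun a => ⟨(a.1, a.2 * (k a.1)⁻¹), by simp⟩) _

lemma range_orbitMap_comp {e : I → I} (he : Surjective e) (p : I → X) :
    range (orbitMap ρ (p ∘ e)) = range (orbitMap ρ p) :=
  (he.prodMap surjective_id).range_comp (orbitMap ρ p)

theorem exists_mem_centralizer_of_orbitMap {p q : I → X}
    (hpq : ∀ i j g, ρ g (p i) = p j ↔ ρ g (q i) = q j)
    (hrange : range (orbitMap ρ p) = range (orbitMap ρ q)) :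
    ∃ σ ∈ Subgroup.centralizer (range ρ), ∀ i, σ (p i) = q i := by
  have hpq' := factorsThrough_orbitMap fun i j g => (hpq i j g).mp
  have hqp' := factorsThrough_orbitMap fun i j g => (hpq i j g).mpr
  let σ : Equiv.Perm X :=
    ⟨orbitExtend ρ p q, orbitExtend ρ q p, leftInverse_orbitExtend hpq' hqp' hrange.ge,
      leftInverse_orbitExtend hqp' hpq' hrange.le⟩
  refine ⟨σ, Subgroup.mem_centralizer_iff.mpr ?_, fun i => ?_⟩
  · rintro _ ⟨g, rfl⟩
    ext z
    exact (orbitExtend_apply hpq' g z).symm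
  · show orbitExtend ρ p q (p i) = q i
    simpa [orbitMap] using orbitExtend_orbitMap hpq' (i, 1)

theorem exists_mem_centralizer_apply_eq (hst : ∀ x y : X, stabOf ρ x = stabOf ρ y) (x y : X) :
    ∃ σ ∈ Subgroup.centralizer (range ρ), σ x = y := by
  have hstab : ∀ g a b, ρ g a = a ↔ ρ g b = b := fun g a b => SetLike.ext_iff.mp (hst a b) g
  by_cases hxy : ∃ k, ρ k x = y
  · obtain ⟨k, rfl⟩ := hxy
    obtain ⟨σ, hσ, hσx⟩ := exists_mem_centralizer_of_orbitMap (p := fun _ : Unit => x)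
      (q := fun _ => ρ k x) (fun _ _ g => hstab g _ _) (range_orbitMap_apply (fun _ => k) _).symm
    exact ⟨σ, hσ, hσx ()⟩
  · have hyx : ∀ g, ρ g y ≠ x := fun g h =>
      hxy ⟨g⁻¹, by rw [map_inv, Equiv.Perm.inv_eq_iff_eq, h]⟩
    let p : Bool → X := fun b => cond b y x
    have hp : ∀ i j g, ρ g (p i) = p j ↔ ρ g (p !i) = p !j := by
      rintro (_ | _) (_ | _) g
      · exact hstab g x y
      · exact iff_of_false (fun h => hxy ⟨g, h⟩) (hyx g)
      · exact iff_of_false (hyx g) (fun h => hxy ⟨g, h⟩)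
      · exact (hstab g x y).symm
    obtain ⟨σ, hσ, hσx⟩ := exists_mem_centralizer_of_orbitMap (q := p ∘ not) hp
      (range_orbitMap_comp Bool.not_surjective p).symm
    exact ⟨σ, hσ, hσx false⟩

end OrbitExtension

theorem centralizer_transitive_iff_monotypical_general
    {G X : Type*} [CommGroup G] (ρ : G →* Equiv.Perm X) :
    (∀ x y : X, ∃ σ ∈ Subgroup.centralizer (Set.range ⇑ρ), σ x = y) ↔
      ∀ x y : X, stabOf ρ x = stabOf ρ y := by
  refine ⟨fun h x y => ?_, fun h => exists_mem_centralizer_apply_eq h⟩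
  obtain ⟨σ, hσ, rfl⟩ := h x y
  exact (stabOf_apply_of_mem_centralizer hσ x).symm

/-- Let `G` be an abelian group acting on a finite nonempty set `X`
through `ρ : G →* Equiv.Perm X`.  Then the centralizer of `ρ` acts transitively on `X`
if and only if any two points of `X` have equal stabilizer subgroups in `G`. -/
theorem centralizer_transitive_iff_monotypical
    {G X : Type*} [CommGroup G] [Fintype X] [Nonempty X] (ρ : G →* Equiv.Perm X) :
    (∀ x y : X, ∃ σ ∈ Subgroup.centralizer (Set.range ⇑ρ), σ x = y) ↔
      ∀ x y : X, stabOf ρ x = stabOf ρ y :=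
  centralizer_transitive_iff_monotypical_general ρ
end

section
/- Let A be a nontrivial abelian group and n : ℕ. The center of the wreath product A ≀ Σ_n equals the range of the diagonal homomorphism z : A →* A ≀ Σ_n sending a to (fun _ => a, 1). -/
/-- The diagonal homomorphism `z : A →* A ≀ Σ_n`, `a ↦ (fun _ => a, 1)`. -/
def wreathDiag (A : Type*) [CommGroup A] (n : ℕ) : A →* WreathProduct A n where
  toFun a := ⟨fun _ => a, 1⟩
  map_one' := rfl
  map_mul' a b := rfl

/-!
A central element `(f, σ)` commutes with `(Pi.mulSingle i a, 1)`; comparing the `i`-th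
coordinates gives `a * f i = f i * (if σ⁻¹ i = i then a else 1)`, so with `a ≠ 1` the
permutation `σ` fixes every `i`. Commuting with `(1, swap i j)` gives `f i = f j`. Conversely,
constant functions are invariant under permutations, so the diagonal is central when `A` is
abelian.
-/

@[simp]
lemma permMulAut_apply {A : Type*} [Group A] {n : ℕ} (σ : Equiv.Perm (Fin n))
    (f : Fin n → A) (i : Fin n) : permMulAut A n σ f i = f (σ⁻¹ i) := rfl

namespace WreathProduct

variable {A : Type*} [Group A] {n : ℕ}

lemma right_eq_one_of_mem_center [Nontrivial A] {x : WreathProduct A n}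
    (hx : x ∈ Subgroup.center (WreathProduct A n)) : x.right = 1 := by
  obtain ⟨a, ha⟩ := exists_ne (1 : A)
  rw [← inv_eq_one]
  refine Equiv.ext fun i => ?_
  by_contra hi
  replace hi : x.right.symm i ≠ i := hi
  have hcomm := congrFun (congrArg SemidirectProduct.left
    (Subgroup.mem_center_iff.mp hx ⟨Pi.mulSingle i a, 1⟩)) i
  exact ha (by simpa [Pi.mulSingle_eq_of_ne hi] using hcomm)

lemma left_apply_eq_of_mem_center {x : WreathProduct A n}
    (hx : x ∈ Subgroup.center (WreathProduct A n)) (i j : Fin n) : x.left i = x.left j := by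
  have hcomm := congrFun (congrArg SemidirectProduct.left
    (Subgroup.mem_center_iff.mp hx ⟨1, Equiv.swap i j⟩)) i
  simpa using hcomm.symm

end WreathProduct

lemma wreathDiag_mem_center {A : Type*} [CommGroup A] {n : ℕ} (a : A) :
    wreathDiag A n a ∈ Subgroup.center (WreathProduct A n) := by
  refine Subgroup.mem_center_iff.mpr fun g => ?_
  ext i
  · simp [wreathDiag, mul_comm]
  · simp [wreathDiag]

/-- Let `A` be a nontrivial abelian group and `n : ℕ`.  The center of
the wreath product `A ≀ Σ_n` equals the range of the diagonal homomorphism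
`z : A →* A ≀ Σ_n` sending `a` to `(fun _ => a, 1)`. -/
theorem center_wreath_eq_diag_range
    (A : Type*) [CommGroup A] [Nontrivial A] (n : ℕ) :
    Subgroup.center (WreathProduct A n) = (wreathDiag A n).range := by
  refine le_antisymm (fun x hx => ?_) (by rintro _ ⟨a, rfl⟩; exact wreathDiag_mem_center a)
  have hright := WreathProduct.right_eq_one_of_mem_center hx
  rcases isEmpty_or_nonempty (Fin n) with _ | ⟨⟨i⟩⟩
  · exact ⟨1, SemidirectProduct.ext (Subsingleton.elim _ _) hright.symm⟩
  · exact ⟨x.left i, SemidirectProduct.ext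
      (funext (WreathProduct.left_apply_eq_of_mem_center hx i)) hright.symm⟩
end

section
/- Let G be an abelian group and m ≥ 1. Say two homomorphisms ρ, ρ' : G →* Equiv.Perm (Fin m) are conjugate if there exists π ∈ Equiv.Perm (Fin m) with ρ' g = π (ρ g) π⁻¹ for all g ∈ G. Then the assignment sending a homomorphism ρ whose induced G-action on Fin m is transitive to the stabilizer of 0 under ρ induces a well-defined bijection between the set of conjugacy classes of homomorphisms ρ : G →* Equiv.Perm (Fin m) with transitive action, and the set of subgroups H of G of index m. (Well-definedness uses that for a transitive action of an abelian group all point stabilizers agree, and they are unchanged by conjugation.) -/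
/-- The conjugacy equivalence relation on transitive homomorphisms
`G →* Equiv.Perm (Fin m)`: `ρ ∼ ρ'` iff there is `π` with `ρ' g = π (ρ g) π⁻¹` for all
`g`. -/
def conjSetoid (G : Type*) [Group G] (m : ℕ) :
    Setoid {ρ : G →* Equiv.Perm (Fin m) // ∀ x y : Fin m, ∃ g : G, ρ g x = y} where
  r ρ ρ' := ∃ π : Equiv.Perm (Fin m), ∀ g : G, ρ'.1 g = π * ρ.1 g * π⁻¹
  iseqv := by
    constructor
    · intro ρ; exact ⟨1, fun g => by group⟩
    · rintro ρ ρ' ⟨π, h⟩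
      exact ⟨π⁻¹, fun g => by rw [h g]; group⟩
    · rintro ρ ρ' ρ'' ⟨π, h⟩ ⟨π', h'⟩
      exact ⟨π' * π, fun g => by rw [h' g, h g]; group⟩

/-!
A transitive permutation representation `ρ` of `G` on `X` whose stabilizer at `x` is `H` is
isomorphic, as a `G`-set, to `G ⧸ H` via `↑g ↦ ρ g x`. Hence two transitive representations with
the same stabilizer are conjugate, and every subgroup of finite index `m` is a stabilizer: transport
left multiplication on `G ⧸ H` along a bijection `G ⧸ H ≃ Fin m`. For abelian `G` the stabilizer
does not depend on the base point (`stab (g • x) = g (stab x) g⁻¹`), so the stabilizer of `0` is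
invariant under conjugation of `ρ`.
-/

section PermRep

variable {G X : Type*} [Group G]

@[simp]
theorem mem_stabOf {ρ : G →* Equiv.Perm X} {x : X} {g : G} : g ∈ stabOf ρ x ↔ ρ g x = x :=
  Iff.rfl

theorem stabOf_eq_of_forall_eq_conj {ρ ρ' : G →* Equiv.Perm X} {π : Equiv.Perm X}
    (h : ∀ g, ρ' g = π * ρ g * π⁻¹) (x : X) : stabOf ρ' x = stabOf ρ (π⁻¹ x) := by
  ext g
  simp [h, Equiv.Perm.inv_def, Equiv.eq_symm_apply]

theorem exists_quotient_equiv_of_stabOf_eq {ρ : G →* Equiv.Perm X}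
    (hρ : ∀ x y : X, ∃ g : G, ρ g x = y) {x : X} {H : Subgroup G} (hH : stabOf ρ x = H) :
    ∃ e : G ⧸ H ≃ X, ∀ g : G, e g = ρ g x := by
  have hrel : ∀ a b : G, (a : G ⧸ H) = b ↔ ρ a x = ρ b x := by
    intro a b
    rw [QuotientGroup.eq, ← hH, mem_stabOf, map_mul, map_inv, Equiv.Perm.mul_apply,
      Equiv.Perm.inv_eq_iff_eq, eq_comm]
  let f : G ⧸ H → X :=
    Quotient.lift (fun g => ρ g x) fun a b hab => (hrel a b).1 (Quotient.sound hab)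
  refine ⟨Equiv.ofBijective f ⟨?_, ?_⟩, fun g => rfl⟩
  · rintro ⟨a⟩ ⟨b⟩ hab
    exact (hrel a b).2 hab
  · intro y
    obtain ⟨g, hg⟩ := hρ x y
    exact ⟨g, hg⟩

theorem index_stabOf_of_transitive {ρ : G →* Equiv.Perm X}
    (hρ : ∀ x y : X, ∃ g : G, ρ g x = y) (x : X) : (stabOf ρ x).index = Nat.card X := by
  obtain ⟨e, -⟩ := exists_quotient_equiv_of_stabOf_eq hρ (rfl : stabOf ρ x = _)
  exact Nat.card_congr e

theorem exists_perm_forall_eq_conj_of_stabOf_eq {ρ ρ' : G →* Equiv.Perm X}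
    (hρ : ∀ x y : X, ∃ g : G, ρ g x = y) (hρ' : ∀ x y : X, ∃ g : G, ρ' g x = y) {x : X}
    (h : stabOf ρ x = stabOf ρ' x) : ∃ π : Equiv.Perm X, ∀ g, ρ' g = π * ρ g * π⁻¹ := by
  obtain ⟨e, he⟩ := exists_quotient_equiv_of_stabOf_eq hρ h
  obtain ⟨e', he'⟩ := exists_quotient_equiv_of_stabOf_eq hρ' rfl
  refine ⟨e.symm.trans e', fun g => Equiv.ext fun y => ?_⟩
  obtain ⟨q, rfl⟩ := e'.surjective y
  induction q using QuotientGroup.induction_on with | H a => ?_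
  -- both sides equal `e' ↑(g * a)`
  simp only [Equiv.Perm.mul_apply, Equiv.Perm.inv_def, Equiv.symm_trans_apply, Equiv.trans_apply,
    Equiv.symm_symm, Equiv.symm_apply_apply]
  rw [he, ← Equiv.Perm.mul_apply, ← map_mul, ← he, Equiv.symm_apply_apply, he', he', map_mul,
    Equiv.Perm.mul_apply]

def permRepOfQuotientEquiv {H : Subgroup G} (e : G ⧸ H ≃ X) : G →* Equiv.Perm X :=
  e.permCongrHom.toMonoidHom.comp (MulAction.toPermHom G (G ⧸ H))

theorem permRepOfQuotientEquiv_apply {H : Subgroup G} (e : G ⧸ H ≃ X) (g : G) (q : G ⧸ H) :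
    permRepOfQuotientEquiv e g (e q) = e (g • q) := by
  simp [permRepOfQuotientEquiv, Equiv.permCongrHom, Equiv.permCongr_apply]

theorem permRepOfQuotientEquiv_transitive {H : Subgroup G} (e : G ⧸ H ≃ X) :
    ∀ x y : X, ∃ g : G, permRepOfQuotientEquiv e g x = y := by
  intro x y
  obtain ⟨q, rfl⟩ := e.surjective x
  obtain ⟨r, rfl⟩ := e.surjective y
  obtain ⟨g, hg⟩ := MulAction.exists_smul_eq G q r
  exact ⟨g, by rw [permRepOfQuotientEquiv_apply, hg]⟩

theorem stabOf_permRepOfQuotientEquiv {H : Subgroup G} (e : G ⧸ H ≃ X) (q : G ⧸ H) :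
    stabOf (permRepOfQuotientEquiv e) (e q) = MulAction.stabilizer G q := by
  ext g
  rw [mem_stabOf, permRepOfQuotientEquiv_apply, e.apply_eq_iff_eq, MulAction.mem_stabilizer_iff]

end PermRep

section Abelian

variable {G X : Type*} [CommGroup G]

theorem stabOf_apply (ρ : G →* Equiv.Perm X) (g : G) (x : X) :
    stabOf ρ (ρ g x) = stabOf ρ x := by
  ext h
  rw [mem_stabOf, mem_stabOf, ← Equiv.Perm.mul_apply, ← map_mul, mul_comm, map_mul,
    Equiv.Perm.mul_apply, (ρ g).injective.eq_iff]

theorem stabOf_eq_of_transitive {ρ : G →* Equiv.Perm X} (hρ : ∀ x y : X, ∃ g : G, ρ g x = y)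
    (x y : X) : stabOf ρ x = stabOf ρ y := by
  obtain ⟨g, rfl⟩ := hρ y x
  exact stabOf_apply ρ g y

end Abelian

/-- Let `G` be an abelian group and `m ≥ 1`.  The assignment sending a
homomorphism `ρ : G →* Equiv.Perm (Fin m)` with transitive action to the stabilizer of
`0` induces a well-defined bijection between conjugacy classes of transitive
homomorphisms and subgroups of `G` of index `m`. -/
theorem conj_classes_transitive_hom_equiv_index_subgroups
    {G : Type*} [CommGroup G] (m : ℕ) (hm : 1 ≤ m) :
    ∃ e : Quotient (conjSetoid G m) ≃ {H : Subgroup G // H.index = m},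
      ∀ ρ : {ρ : G →* Equiv.Perm (Fin m) // ∀ x y : Fin m, ∃ g : G, ρ g x = y},
        (e (Quotient.mk (conjSetoid G m) ρ) : Subgroup G) = stabOf ρ.1 ⟨0, hm⟩ := by
  let x₀ : Fin m := ⟨0, hm⟩
  let F (ρ : {ρ : G →* Equiv.Perm (Fin m) // ∀ x y : Fin m, ∃ g : G, ρ g x = y}) :
      {H : Subgroup G // H.index = m} :=
    ⟨stabOf ρ.1 x₀, by rw [index_stabOf_of_transitive ρ.2, Nat.card_fin]⟩
  have hF : ∀ ρ ρ', (conjSetoid G m).r ρ ρ' → F ρ = F ρ' := by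
    rintro ρ ρ' ⟨π, hπ⟩
    exact Subtype.ext (stabOf_eq_of_transitive ρ.2 _ _ |>.trans
      (stabOf_eq_of_forall_eq_conj hπ x₀).symm)
  refine ⟨Equiv.ofBijective (Quotient.lift F hF) ⟨?_, ?_⟩, fun ρ => rfl⟩
  · rintro ⟨ρ⟩ ⟨ρ'⟩ h
    exact Quotient.sound (exists_perm_forall_eq_conj_of_stabOf_eq ρ.2 ρ'.2
      (congrArg Subtype.val h))
  · rintro ⟨H, hH⟩
    have : Finite (G ⧸ H) := Nat.finite_of_card_ne_zero (by rw [← Subgroup.index, hH]; omega)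
    let e : G ⧸ H ≃ Fin m := Finite.equivFinOfCardEq hH
    refine ⟨Quotient.mk _ ⟨permRepOfQuotientEquiv e, permRepOfQuotientEquiv_transitive e⟩,
      Subtype.ext ?_⟩
    calc stabOf (permRepOfQuotientEquiv e) x₀
        = stabOf (permRepOfQuotientEquiv e) (e (1 : G)) :=
          stabOf_eq_of_transitive (permRepOfQuotientEquiv_transitive e) _ _
      _ = H := by rw [stabOf_permRepOfQuotientEquiv, MulAction.stabilizer_quotient]
end
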